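/- For every n ≥ 1: if C_4^{□n} (≅ Q_{2n}) has a source cycle, i.e., a Latin Hamilton decomposition, then C_4^{□2n} (≅ Q_{4n}) also has a source cycle. -/

import Mathlib

open SimpleGraph

/-- The hypercube graph `Q_n` on vertex set `Fin n → Bool`:
two vertices are adjacent iff they differ in exactly one coordinate. -/
def hypercube (n : ℕ) : SimpleGraph (Fin n → Bool) where
  Adj u v := ∃ i, u i ≠ v i ∧ ∀ j, j ≠ i → u j = v j
  symm := by
    constructor
    rintro u v ⟨i, hne, hrest⟩
    exact ⟨i, hne.symm, fun j hj => (hrest j hj).symm⟩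
  loopless := by
    constructor
    rintro u ⟨i, hne, -⟩
    exact hne rfl

/-- The cycle graph `C_m` on `ZMod m`: `i` and `j` are adjacent iff
`i - j = 1` or `j - i = 1`. -/
def cycGraph (m : ℕ) : SimpleGraph (ZMod m) :=
  SimpleGraph.fromRel (fun i j => i - j = 1)

/-- The graph `C_m^{□k}` on `Fin k → ZMod m`: two vertices are adjacent iff they
differ in exactly one coordinate, and in that coordinate they differ by `±1`. -/
def torusGraph (m k : ℕ) : SimpleGraph (Fin k → ZMod m) where
  Adj u v := ∃ i, (u i ≠ v i ∧ (u i - v i = 1 ∨ v i - u i = 1)) ∧ ∀ j, j ≠ i → u j = v j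
  symm := by
    constructor
    rintro u v ⟨i, ⟨hne, hpm⟩, hrest⟩
    exact ⟨i, ⟨hne.symm, hpm.symm⟩, fun j hj => (hrest j hj).symm⟩
  loopless := by
    constructor
    rintro u ⟨i, ⟨hne, -⟩, -⟩
    exact hne rfl

private lemma torus_adj_comp (m k : ℕ) (σ : Equiv.Perm (Fin k)) {u v : Fin k → ZMod m}
    (h : (torusGraph m k).Adj u v) : (torusGraph m k).Adj (u ∘ σ) (v ∘ σ) := by
  obtain ⟨i, ⟨hne, hpm⟩, hrest⟩ := h
  refine ⟨σ.symm i, ⟨?_, ?_⟩, ?_⟩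
  · simpa using hne
  · simpa using hpm
  · intro j hj
    have : σ j ≠ i := fun hc => hj (by simp [← hc])
    simpa using hrest (σ j) this

/-- The automorphism of `C_m^{□k}` induced by a permutation `σ` of the axes,
sending a vertex `v : Fin k → ZMod m` to `v ∘ σ⁻¹`. -/
def permIso (m k : ℕ) (σ : Equiv.Perm (Fin k)) : torusGraph m k ≃g torusGraph m k where
  toEquiv := Equiv.arrowCongr σ (Equiv.refl (ZMod m))
  map_rel_iff' := by
    intro u v
    constructor
    · intro h
      have h2 := torus_adj_comp m k σ h
      have hu : (Equiv.arrowCongr σ (Equiv.refl (ZMod m)) u) ∘ σ = u := by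
        funext x; simp
      have hv : (Equiv.arrowCongr σ (Equiv.refl (ZMod m)) v) ∘ σ = v := by
        funext x; simp
      rwa [hu, hv] at h2
    · intro h
      have h2 := torus_adj_comp m k σ.symm h
      have hu : u ∘ ⇑σ.symm = Equiv.arrowCongr σ (Equiv.refl (ZMod m)) u := by
        funext x; simp
      have hv : v ∘ ⇑σ.symm = Equiv.arrowCongr σ (Equiv.refl (ZMod m)) v := by
        funext x; simp
      rwa [hu, hv] at h2

/-- A Hamilton decomposition of a simple graph `G`: a family of Hamiltonian cycles
whose edge sets are pairwise disjoint and together cover every edge of `G`. -/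
def IsHamDecomp {V : Type*} [DecidableEq V] (G : SimpleGraph V) {ι : Type*}
    (C : ι → Σ v, G.Walk v v) : Prop :=
  (∀ i, (C i).2.IsHamiltonianCycle) ∧
  (∀ i j, i ≠ j → ∀ e, e ∈ (C i).2.edges → e ∉ (C j).2.edges) ∧
  (∀ e ∈ G.edgeSet, ∃ i, e ∈ (C i).2.edges)

/-- `C_m^{□k}` has a *source cycle* if it has a Latin Hamilton decomposition:
a Hamiltonian cycle `H` and a Latin family `(σ₁, …, σ_k)` of permutations of the axes
(`σ₁ = id` and every column `i ↦ σᵢ(j)` is a bijection) such that the images of `H`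
under the induced automorphisms form a Hamilton decomposition. -/
def HasSourceCycle (m k : ℕ) : Prop :=
  ∃ (v : Fin k → ZMod m) (H : (torusGraph m k).Walk v v) (σ : Fin k → Equiv.Perm (Fin k)),
    (∀ h : 0 < k, σ ⟨0, h⟩ = 1) ∧ (∀ j, Function.Bijective (fun i => σ i j)) ∧
    IsHamDecomp (torusGraph m k) (fun i => ⟨_, H.map (permIso m k (σ i)).toHom⟩)


/-!
List the source cycle `H` of `C_m^{□n}` as `P : ZMod N → C_m^{□n}`, so that `σᵢ(H)` has
the edges `σᵢ{P z, P (z + 1)}`. Splitting the `2n` axes into two blocks of `n` makes `C_m^{□2n}`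
the product `C_m^{□n} □ C_m^{□n}`. The torus `ZMod N × ZMod N` has a Hamiltonian spiral that steps
`(z, q) ↦ (z + 1, q)` off the seam `z + q + 1 = 0` and `(z, q) ↦ (z, q + 1)` on it; its image
`K` under `P × P` is the new source cycle. As the seam is symmetric in `z` and `q`, `K` moves
block `0` off the seam and block `1` on it, and `K` with its blocks swapped does the opposite.
So an edge of `C_m^{□2n}`, given by its moving block `b`, its edge `σᵢ{P z, P (z + 1)}` there
and the position `σᵢ (P q)` of the other block, lies in exactly one of the `2n` cycles obtained
from `K` by applying `σᵢ` to both blocks and then swapping them or not: the one with swap bit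
`b - seam z q`. This new family is the product of `σ` with the Latin square of `ZMod 2`, hence
Latin.
-/

open Equiv

lemma ZMod.val_add_one_eq_mod {N : ℕ} [NeZero N] (z : ZMod N) :
    (z + 1).val = (z.val + 1) % N := by
  rw [← ZMod.val_natCast, Nat.cast_succ, ZMod.natCast_zmod_val]

lemma injective_sym2_mk_add_one {V : Type*} {N : ℕ} (hN : 3 ≤ N) {f : ZMod N → V}
    (hf : f.Injective) : Function.Injective fun z => s(f z, f (z + 1)) := by
  intro z z' h
  rcases Sym2.eq_iff.1 h with ⟨h₁, -⟩ | ⟨h₁, h₂⟩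
  · exact hf h₁
  · have htwo : ((2 : ℕ) : ZMod N) = 0 := by push_cast; linear_combination hf h₂ - hf h₁
    have := Nat.le_of_dvd two_pos ((ZMod.natCast_eq_zero_iff 2 N).1 htwo)
    omega

namespace SimpleGraph

variable {V : Type*} {G : SimpleGraph V}

namespace Walk

lemma getVert_val_add_one {u : V} (p : G.Walk u u) {N : ℕ} [NeZero N] (hN : p.length = N)
    (z : ZMod N) : p.getVert (z + 1).val = p.getVert (z.val + 1) := by
  rw [ZMod.val_add_one_eq_mod]
  rcases Nat.lt_or_ge (z.val + 1) N with h | h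
  · rw [Nat.mod_eq_of_lt h]
  · rw [show z.val + 1 = N by have := z.val_lt; omega, Nat.mod_self, getVert_zero, ← hN,
      getVert_length]

lemma mem_edges_iff_exists_zmod {u : V} (p : G.Walk u u) {N : ℕ} [NeZero N]
    (hN : p.length = N) {e : Sym2 V} :
    e ∈ p.edges ↔ ∃ z : ZMod N, e = s(p.getVert z.val, p.getVert (z + 1).val) := by
  induction e using Sym2.ind with | _ a b => ?_
  simp only [mk_mem_edges_iff_exists, hN, getVert_val_add_one p hN]
  constructor
  · rintro ⟨i, hi, he⟩
    exact ⟨i, by rw [ZMod.val_cast_of_lt hi, he]⟩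
  · rintro ⟨z, he⟩
    exact ⟨z.val, z.val_lt, he.symm⟩

theorem IsHamiltonianCycle.exists_cyclic_enumeration [Fintype V] [DecidableEq V] {u : V}
    {p : G.Walk u u} (hp : p.IsHamiltonianCycle) :
    ∃ (N : ℕ) (f : ZMod N → V), 3 ≤ N ∧ f.Bijective ∧
      ∀ e, e ∈ p.edges ↔ ∃ z, e = s(f z, f (z + 1)) := by
  have h3 := hp.isCycle.three_le_length
  have : NeZero p.length := ⟨by omega⟩
  refine ⟨p.length, fun z => p.getVert z.val, h3, ?_, fun e => p.mem_edges_iff_exists_zmod rfl⟩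
  have hinj : Function.Injective fun z : ZMod p.length => p.getVert z.val := fun z z' h =>
    ZMod.val_injective _ <| hp.isCycle.getVert_injOn'
      (Nat.le_sub_one_of_lt z.val_lt) (Nat.le_sub_one_of_lt z'.val_lt) h
  exact (Fintype.bijective_iff_injective_and_card _).2 ⟨hinj, by rw [ZMod.card, hp.length_eq]⟩

end Walk

theorem exists_isHamiltonianCycle_of_cyclic_enumeration [DecidableEq V] {N : ℕ} (hN : 3 ≤ N)
    {f : ZMod N → V} (hf : f.Bijective) (hadj : ∀ z, G.Adj (f z) (f (z + 1))) :
    ∃ (u : V) (p : G.Walk u u), p.IsHamiltonianCycle ∧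
      ∀ e, e ∈ p.edges ↔ ∃ z, e = s(f z, f (z + 1)) := by
  have : NeZero N := ⟨by omega⟩
  let : Fintype V := Fintype.ofBijective f hf
  set l := (List.range (N + 1)).map fun k : ℕ => f k
  have hne : l ≠ [] := by simp [l]
  have hchain : l.IsChain G.Adj :=
    List.isChain_map _ |>.2 <| (List.isChain_range_succ _ _).2 fun k _ => by
      simpa using hadj k
  let p : G.Walk (f 0) (f 0) := (Walk.ofSupport l hne hchain).copy (by simp [l]) (by simp [l])
  have hlen : p.length = N := by simp [p, l]
  have hvert : ∀ k ≤ N, p.getVert k = f k := fun k hk => by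
    rw [Walk.getVert_copy, Walk.getVert_eq_support_getElem _ (by simpa [l] using hk)]
    simp [l]
  have hval : ∀ z : ZMod N, p.getVert z.val = f z := fun z => by
    rw [hvert _ z.val_lt.le, ZMod.natCast_zmod_val]
  refine ⟨f 0, p, ?_, fun e => by simp only [p.mem_edges_iff_exists_zmod hlen, hval]⟩
  rw [Walk.isHamiltonianCycle_iff_isCycle_and_length_eq,
    Walk.isCycle_iff_isPath_tail_and_le_length, ← Walk.IsPath.getVert_injOn_iff, hlen,
    ← Fintype.card_of_bijective hf, ZMod.card]
  refine ⟨⟨fun i hi j hj hij => ?_, hN⟩, rfl⟩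
  have htail : p.tail.length = N - 1 := by
    have := Walk.length_tail_add_one (Walk.not_nil_iff_lt_length.2 (by omega : 0 < p.length))
    omega
  simp only [Set.mem_ofPred_eq, htail] at hi hj
  rw [Walk.getVert_tail, Walk.getVert_tail, hvert _ (by omega), hvert _ (by omega)] at hij
  push_cast at hij
  have := congrArg ZMod.val (add_right_cancel (hf.1 hij))
  rwa [ZMod.val_cast_of_lt (by omega), ZMod.val_cast_of_lt (by omega)] at this

end SimpleGraph

theorem isHamDecomp_of_labelling {V ι Λ : Type*} [DecidableEq V] {G : SimpleGraph V}
    {C : ι → Σ v, G.Walk v v} (hC : ∀ i, (C i).2.IsHamiltonianCycle) (edge : Λ → Sym2 V)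
    (colour : Λ → ι) (hedge : edge.Injective) (hcover : ∀ e ∈ G.edgeSet, ∃ l, edge l = e)
    (hC_edges : ∀ i e, e ∈ (C i).2.edges ↔ ∃ l, colour l = i ∧ edge l = e) :
    IsHamDecomp G C := by
  refine ⟨hC, fun i j hij e hi hj => ?_, fun e he => ?_⟩
  · obtain ⟨l, rfl, rfl⟩ := (hC_edges _ _).1 hi
    obtain ⟨l', rfl, hl'⟩ := (hC_edges _ _).1 hj
    exact hij (by rw [hedge hl'])
  · obtain ⟨l, rfl⟩ := hcover e he
    exact ⟨colour l, (hC_edges _ _).2 ⟨l, rfl, rfl⟩⟩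

section Decomposition

variable {V ι : Type*} [DecidableEq V] {G : SimpleGraph V} {v : V} {H : G.Walk v v}
  {φ : ι → G ≃g G} {N : ℕ} {f : ZMod N → V}

lemma IsHamDecomp.injective_map_edge (hdec : IsHamDecomp G fun i => ⟨_, H.map (φ i).toHom⟩)
    (hN : 3 ≤ N) (hf : f.Injective) (hH : ∀ e, e ∈ H.edges ↔ ∃ z, e = s(f z, f (z + 1))) :
    Function.Injective fun l : ι × ZMod N => s(f l.2, f (l.2 + 1)).map (φ l.1) := by
  rintro ⟨i, z⟩ ⟨i', z'⟩
    (h : s(f z, f (z + 1)).map (φ i) = s(f z', f (z' + 1)).map (φ i'))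
  have hmem : ∀ i z, s(f z, f (z + 1)).map (φ i) ∈ (H.map (φ i).toHom).edges := fun i z => by
    rw [Walk.edges_map]
    exact List.mem_map_of_mem ((hH _).2 ⟨z, rfl⟩)
  obtain rfl : i = i' := by
    by_contra hi
    exact hdec.2.1 i i' hi _ (hmem i z) (by rw [h]; exact hmem i' z')
  exact Prod.ext rfl (injective_sym2_mk_add_one hN hf (Sym2.map.injective (φ i).injective h))

lemma IsHamDecomp.exists_map_edge_eq (hdec : IsHamDecomp G fun i => ⟨_, H.map (φ i).toHom⟩)
    (hH : ∀ e, e ∈ H.edges ↔ ∃ z, e = s(f z, f (z + 1))) {e : Sym2 V}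
    (he : e ∈ G.edgeSet) : ∃ l : ι × ZMod N, s(f l.2, f (l.2 + 1)).map (φ l.1) = e := by
  obtain ⟨i, hi⟩ := hdec.2.2 e he
  obtain ⟨e₀, he₀, rfl⟩ := List.mem_map.1 (Walk.edges_map _ H ▸ hi)
  obtain ⟨z, rfl⟩ := (hH e₀).1 he₀
  exact ⟨(i, z), rfl⟩

end Decomposition

section Spiral

/-- The `a`-th lap (`a = k / N`) runs along row `a` from `(-a, a)` to `(-a - 1, a)`, a point of
the seam `z + q + 1 = 0`, where `spiralStep` moves up to the next lap. -/
def spiral (N k : ℕ) : ZMod N × ZMod N :=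
  (((k % N : ℕ) : ZMod N) - (k / N : ℕ), (k / N : ℕ))

variable {N : ℕ}

def spiralStep (x : ZMod N × ZMod N) : ZMod N × ZMod N :=
  if x.1 + x.2 + 1 = 0 then (x.1, x.2 + 1) else (x.1 + 1, x.2)

lemma spiral_succ (hN : 0 < N) (k : ℕ) : spiral N (k + 1) = spiralStep (spiral N k) := by
  obtain ⟨a, b, hb, rfl⟩ : ∃ a b, b < N ∧ k = b + N * a :=
    ⟨k / N, k % N, Nat.mod_lt _ hN, (Nat.mod_add_div k N).symm⟩
  obtain ⟨ha, hb'⟩ : (b + N * a) / N = a ∧ (b + N * a) % N = b :=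
    (Nat.div_mod_unique hN).2 ⟨rfl, hb⟩
  have hsum : ((b : ZMod N) - a) + a + 1 = ((b + 1 : ℕ) : ZMod N) := by push_cast; ring
  rcases Nat.lt_or_ge (b + 1) N with h | h
  · obtain ⟨ha₁, hb₁⟩ : (b + N * a + 1) / N = a ∧ (b + N * a + 1) % N = b + 1 :=
      (Nat.div_mod_unique hN).2 ⟨by ring, h⟩
    have hne : ((b + 1 : ℕ) : ZMod N) ≠ 0 := by
      rw [Ne, ZMod.natCast_eq_zero_iff]
      exact Nat.not_dvd_of_pos_of_lt (by omega) h
    simp only [spiral, spiralStep, ha, hb', ha₁, hb₁, hsum, hne, if_false]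
    ext <;> push_cast <;> ring
  · have hN' : b + 1 = N := by omega
    obtain ⟨ha₁, hb₁⟩ : (b + N * a + 1) / N = a + 1 ∧ (b + N * a + 1) % N = 0 :=
      (Nat.div_mod_unique hN).2 ⟨by rw [← hN']; ring, hN⟩
    have hb₂ : ((b + 1 : ℕ) : ZMod N) = 0 := by rw [hN', ZMod.natCast_self]
    simp only [spiral, spiralStep, ha, hb', ha₁, hb₁, hsum, hb₂, if_true]
    push_cast at hb₂ ⊢
    ext
    · linear_combination -hb₂
    · rfl

lemma spiral_mod (k : ℕ) : spiral N (k % (N * N)) = spiral N k := by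
  simp only [spiral, Nat.mod_mul_right_mod, Nat.mod_mul_right_div_self, ZMod.natCast_mod]

lemma spiral_injOn : Set.InjOn (spiral N) (Set.Iio (N * N)) := by
  intro k hk k' hk' h
  have hN : 0 < N := Nat.pos_of_mul_pos_left (Nat.zero_lt_of_lt hk)
  obtain ⟨hr, hq⟩ := Prod.mk.inj h
  have hq' : k / N = k' / N := by
    simpa [ZMod.val_cast_of_lt (Nat.div_lt_of_lt_mul hk),
      ZMod.val_cast_of_lt (Nat.div_lt_of_lt_mul hk')] using congrArg ZMod.val hq
  rw [hq, sub_left_inj] at hr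
  have hr' : k % N = k' % N := by
    simpa [ZMod.val_cast_of_lt (Nat.mod_lt _ hN)] using congrArg ZMod.val hr
  rw [← Nat.div_add_mod k N, ← Nat.div_add_mod k' N, hq', hr']

theorem exists_bijective_zmod_spiralStep [NeZero N] :
    ∃ s : ZMod (N * N) → ZMod N × ZMod N,
      s.Bijective ∧ ∀ t, s (t + 1) = spiralStep (s t) := by
  refine ⟨fun t => spiral N t.val, ?_, fun t => ?_⟩
  · refine (Fintype.bijective_iff_injective_and_card _).2 ⟨fun t t' h => ?_, by simp⟩
    exact ZMod.val_injective _ (spiral_injOn t.val_lt t'.val_lt h)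
  · show spiral N (t + 1).val = spiralStep (spiral N t.val)
    rw [ZMod.val_add_one_eq_mod, spiral_mod, spiral_succ (Nat.pos_of_neZero N)]

end Spiral

section Blocks

variable {m n k : ℕ}

def blockEquiv : (Fin k → Fin n → ZMod m) ≃ (Fin (k * n) → ZMod m) :=
  (Equiv.curry _ _ _).symm.trans (finProdFinEquiv.arrowCongr (Equiv.refl _))

@[simp] lemma blockEquiv_apply_finProdFinEquiv (x : Fin k → Fin n → ZMod m) (b : Fin k)
    (i : Fin n) : blockEquiv x (finProdFinEquiv (b, i)) = x b i := by
  simp [blockEquiv]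

lemma torusGraph_adj_blockEquiv {x y : Fin k → Fin n → ZMod m} :
    (torusGraph m (k * n)).Adj (blockEquiv x) (blockEquiv y) ↔
      ∃ b, (torusGraph m n).Adj (x b) (y b) ∧ ∀ b' ≠ b, x b' = y b' := by
  constructor
  · rintro ⟨j, hj, hrest⟩
    obtain ⟨⟨b, i⟩, rfl⟩ := finProdFinEquiv.surjective j
    rw [blockEquiv_apply_finProdFinEquiv, blockEquiv_apply_finProdFinEquiv] at hj
    refine ⟨b, ⟨i, hj, fun i' hi' => ?_⟩, fun b' hb' => funext fun i' => ?_⟩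
    · simpa using hrest (finProdFinEquiv (b, i')) (by simpa using hi')
    · simpa using hrest (finProdFinEquiv (b', i')) (by simp [hb'])
  · rintro ⟨b, ⟨i, hi, hrest⟩, hother⟩
    refine ⟨finProdFinEquiv (b, i), by simpa using hi, fun j hj => ?_⟩
    obtain ⟨⟨b', i'⟩, rfl⟩ := finProdFinEquiv.surjective j
    rw [blockEquiv_apply_finProdFinEquiv, blockEquiv_apply_finProdFinEquiv]
    by_cases hb : b' = b
    · subst hb
      exact hrest i' (by simpa using hj)
    · exact congrFun (hother b' hb) i'

def blockPerm (π : Perm (Fin k)) (ρ : Perm (Fin n)) : Perm (Fin (k * n)) :=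
  finProdFinEquiv.permCongr (π.prodCongr ρ)

@[simp] lemma blockPerm_apply_finProdFinEquiv (π : Perm (Fin k)) (ρ : Perm (Fin n)) (b : Fin k)
    (i : Fin n) : blockPerm π ρ (finProdFinEquiv (b, i)) = finProdFinEquiv (π b, ρ i) := by
  simp [blockPerm, Equiv.permCongr_apply]

@[simp] lemma blockPerm_symm (π : Perm (Fin k)) (ρ : Perm (Fin n)) :
    (blockPerm π ρ).symm = blockPerm π.symm ρ.symm := rfl

@[simp] lemma blockPerm_one : blockPerm 1 1 = (1 : Perm (Fin (k * n))) :=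
  finProdFinEquiv.permCongr_refl

lemma permIso_apply (σ : Perm (Fin k)) (x : Fin k → ZMod m) (j : Fin k) :
    permIso m k σ x j = x (σ.symm j) := rfl

lemma permIso_one_toHom : (permIso m k 1).toHom = SimpleGraph.Hom.id := rfl

lemma permIso_blockPerm (π : Perm (Fin k)) (ρ : Perm (Fin n)) (x : Fin k → Fin n → ZMod m) :
    permIso m (k * n) (blockPerm π ρ) (blockEquiv x) =
      blockEquiv fun b => permIso m n ρ (x (π.symm b)) := by
  funext j
  obtain ⟨⟨b, i⟩, rfl⟩ := finProdFinEquiv.surjective j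
  simp [permIso_apply]

end Blocks

section TwoBlocks

variable {m n : ℕ} {V : Type*}

def blockPair (b : Fin 2) (a c : V) : Fin 2 → V := fun b' => if b' = b then a else c

@[simp] lemma blockPair_self (b : Fin 2) (a c : V) : blockPair b a c b = a := if_pos rfl

lemma blockPair_of_ne {b b' : Fin 2} (h : b' ≠ b) (a c : V) : blockPair b a c b' = c := if_neg h

lemma blockPair_zero (a c : V) : blockPair 0 a c = blockPair 1 c a := by
  funext b'
  fin_cases b' <;> rfl

lemma eq_blockPair (x : Fin 2 → V) (b : Fin 2) : x = blockPair b (x b) (x (b + 1)) := by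
  funext b'
  fin_cases b <;> fin_cases b' <;> rfl

lemma bijective_blockPair_zero : Function.Bijective fun x : V × V => blockPair 0 x.1 x.2 :=
  ⟨fun _ _ h => Prod.ext (congrFun h 0) (congrFun h 1),
    fun x => ⟨(x 0, x 1), (eq_blockPair x 0).symm⟩⟩

lemma blockPair_eq_blockPair {b b' : Fin 2} {a₁ a₂ x y c c' : V}
    (h₁ : blockPair b a₁ c = blockPair b' x c') (h₂ : blockPair b a₂ c = blockPair b' y c')
    (ha : a₁ ≠ a₂) : b = b' ∧ a₁ = x ∧ a₂ = y ∧ c = c' := by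
  obtain rfl : b = b' := by
    by_contra hb
    have h₁b := congrFun h₁ b
    have h₂b := congrFun h₂ b
    simp only [blockPair_self, blockPair_of_ne hb] at h₁b h₂b
    exact ha (h₁b.trans h₂b.symm)
  have hne : b + 1 ≠ b := by fin_cases b <;> decide
  simpa [blockPair_of_ne hne] using
    And.intro (congrFun h₁ b) (And.intro (congrFun h₂ b) (congrFun h₁ (b + 1)))

lemma blockPair_comp_sub (f : V → V) (b β : Fin 2) (a c : V) :
    (fun b' => f (blockPair b a c (b' - β))) = blockPair (b + β) (f a) (f c) := by
  funext b'
  simp only [blockPair, sub_eq_iff_eq_add, apply_ite f]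

def blockEdge (b : Fin 2) (e : Sym2 (Fin n → ZMod m)) (c : Fin n → ZMod m) :
    Sym2 (Fin (2 * n) → ZMod m) :=
  e.map fun a => blockEquiv (blockPair b a c)

lemma blockEdge_mem_edgeSet {e : Sym2 (Fin n → ZMod m)} (he : e ∈ (torusGraph m n).edgeSet)
    (b : Fin 2) (c : Fin n → ZMod m) : blockEdge b e c ∈ (torusGraph m (2 * n)).edgeSet := by
  induction e using Sym2.ind with | _ a a' => ?_
  refine torusGraph_adj_blockEquiv.2 ⟨b, by simpa using he, fun b' hb' => ?_⟩
  simp [blockPair_of_ne hb']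

lemma exists_blockEdge_eq {e : Sym2 (Fin (2 * n) → ZMod m)}
    (he : e ∈ (torusGraph m (2 * n)).edgeSet) :
    ∃ b, ∃ e₀ ∈ (torusGraph m n).edgeSet, ∃ c, blockEdge b e₀ c = e := by
  induction e using Sym2.ind with | _ u w => ?_
  obtain ⟨x, rfl⟩ := blockEquiv.surjective u
  obtain ⟨y, rfl⟩ := blockEquiv.surjective w
  obtain ⟨b, hadj, hother⟩ := torusGraph_adj_blockEquiv.1 he
  have hne : b + 1 ≠ b := by fin_cases b <;> decide
  refine ⟨b, s(x b, y b), hadj, x (b + 1), ?_⟩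
  rw [blockEdge, Sym2.map_mk, hother _ hne, ← eq_blockPair, ← hother _ hne, ← eq_blockPair]

lemma blockEdge_injective {b b' : Fin 2} {e e' : Sym2 (Fin n → ZMod m)} {c c' : Fin n → ZMod m}
    (he : ¬ e.IsDiag) (h : blockEdge b e c = blockEdge b' e' c') :
    b = b' ∧ e = e' ∧ c = c' := by
  induction e using Sym2.ind with | _ a₁ a₂ => ?_
  induction e' using Sym2.ind with | _ a₁' a₂' => ?_
  rw [Sym2.mk_isDiag_iff] at he
  simp only [blockEdge, Sym2.map_mk, Sym2.eq_iff, blockEquiv.injective.eq_iff] at h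
  rcases h with ⟨h₁, h₂⟩ | ⟨h₁, h₂⟩
  · obtain ⟨rfl, rfl, rfl, rfl⟩ := blockPair_eq_blockPair h₁ h₂ he
    exact ⟨rfl, rfl, rfl⟩
  · obtain ⟨rfl, rfl, rfl, rfl⟩ := blockPair_eq_blockPair h₁ h₂ he
    exact ⟨rfl, Sym2.eq_swap, rfl⟩

lemma blockEdge_map_permIso (b β : Fin 2) (ρ : Perm (Fin n)) (e : Sym2 (Fin n → ZMod m))
    (c : Fin n → ZMod m) :
    (blockEdge b e c).map (permIso m (2 * n) (blockPerm (Equiv.addRight β) ρ)) =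
      blockEdge (b + β) (e.map (permIso m n ρ)) (permIso m n ρ c) := by
  simp only [blockEdge, Sym2.map_map]
  congr 1
  funext a
  simp [permIso_blockPerm, ← blockPair_comp_sub, sub_eq_add_neg]

end TwoBlocks

section Latin

variable {n : ℕ} (σ : Fin n → Perm (Fin n))

def doubledFamily (j : Fin (2 * n)) : Perm (Fin (2 * n)) :=
  blockPerm (Equiv.addRight (finProdFinEquiv.symm j).1) (σ (finProdFinEquiv.symm j).2)

@[simp] lemma doubledFamily_finProdFinEquiv (β : Fin 2) (i : Fin n) :
    doubledFamily σ (finProdFinEquiv (β, i)) = blockPerm (Equiv.addRight β) (σ i) := by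
  simp [doubledFamily]

variable {σ}

lemma doubledFamily_zero (hn : 0 < n) (h₀ : σ ⟨0, hn⟩ = 1) (h : 0 < 2 * n) :
    doubledFamily σ ⟨0, h⟩ = 1 := by
  have : (⟨0, h⟩ : Fin (2 * n)) = finProdFinEquiv (0, ⟨0, hn⟩) := by ext; simp
  rw [this, doubledFamily_finProdFinEquiv, h₀, Equiv.addRight_zero, blockPerm_one]

lemma bijective_doubledFamily_apply (hσ : ∀ j, Function.Bijective fun i => σ i j)
    (c : Fin (2 * n)) : Function.Bijective fun j => doubledFamily σ j c := by
  obtain ⟨⟨b, k⟩, rfl⟩ := finProdFinEquiv.surjective c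
  have : (fun j => doubledFamily σ j (finProdFinEquiv (b, k))) =
      finProdFinEquiv ∘ Prod.map (b + ·) (fun i => σ i k) ∘ finProdFinEquiv.symm := by
    funext j
    obtain ⟨⟨β, i⟩, rfl⟩ := finProdFinEquiv.surjective j
    simp
  rw [this]
  exact finProdFinEquiv.bijective.comp
    (((Equiv.addLeft b).bijective.prodMap (hσ k)).comp finProdFinEquiv.symm.bijective)

end Latin

section Doubling

variable {m n N : ℕ} {σ : Fin n → Perm (Fin n)} {P : ZMod N → Fin n → ZMod m}

def seam (z q : ZMod N) : Fin 2 := if z + q + 1 = 0 then 1 else 0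

lemma seam_comm (z q : ZMod N) : seam z q = seam q z := by
  simp only [seam, add_comm z q]

variable (P) in
def pairVertex (x : ZMod N × ZMod N) : Fin (2 * n) → ZMod m :=
  blockEquiv (blockPair 0 (P x.1) (P x.2))

lemma sym2_pairVertex_spiralStep (z q : ZMod N) :
    s(pairVertex P (z, q), pairVertex P (spiralStep (z, q))) =
      if z + q + 1 = 0 then blockEdge 1 s(P q, P (q + 1)) (P z)
      else blockEdge 0 s(P z, P (z + 1)) (P q) := by
  by_cases h : z + q + 1 = 0 <;> simp [spiralStep, h, pairVertex, blockEdge, blockPair_zero]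

lemma exists_sym2_pairVertex_spiralStep_iff {e : Sym2 (Fin (2 * n) → ZMod m)} :
    (∃ x, e = s(pairVertex P x, pairVertex P (spiralStep x))) ↔
      ∃ z q, e = blockEdge (seam z q) s(P z, P (z + 1)) (P q) := by
  constructor
  · rintro ⟨⟨z, q⟩, rfl⟩
    rw [sym2_pairVertex_spiralStep]
    split_ifs with h
    · exact ⟨q, z, by rw [seam_comm, seam, if_pos h]⟩
    · exact ⟨z, q, by rw [seam, if_neg h]⟩
  · rintro ⟨z, q, rfl⟩
    by_cases h : z + q + 1 = 0
    · refine ⟨(q, z), ?_⟩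
      rw [sym2_pairVertex_spiralStep, add_comm q z, if_pos h, seam, if_pos h]
    · exact ⟨(z, q), by rw [sym2_pairVertex_spiralStep, if_neg h, seam, if_neg h]⟩

theorem exists_doubled_cycle (hN : 3 ≤ N) (hP : P.Bijective)
    (hadj : ∀ z, (torusGraph m n).Adj (P z) (P (z + 1))) :
    ∃ (u : Fin (2 * n) → ZMod m) (K : (torusGraph m (2 * n)).Walk u u), K.IsHamiltonianCycle ∧
      ∀ e, e ∈ K.edges ↔ ∃ z q, e = blockEdge (seam z q) s(P z, P (z + 1)) (P q) := by
  have : NeZero N := ⟨by omega⟩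
  obtain ⟨sp, hsp, hsucc⟩ := exists_bijective_zmod_spiralStep (N := N)
  have hpair : (pairVertex P).Bijective :=
    blockEquiv.bijective.comp (bijective_blockPair_zero.comp (hP.prodMap hP))
  have hstep (x) : (torusGraph m (2 * n)).Adj (pairVertex P x) (pairVertex P (spiralStep x)) := by
    rw [← SimpleGraph.mem_edgeSet, sym2_pairVertex_spiralStep]
    split_ifs <;> exact blockEdge_mem_edgeSet (hadj _) _ _
  obtain ⟨u, K, hK, hKedges⟩ := exists_isHamiltonianCycle_of_cyclic_enumeration
    (by nlinarith) (hpair.comp hsp) fun t => by simpa only [Function.comp_apply, hsucc] using hstep _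
  refine ⟨u, K, hK, fun e => ?_⟩
  rw [hKedges, ← exists_sym2_pairVertex_spiralStep_iff]
  simp only [Function.comp_apply, hsucc]
  constructor
  · exact fun ⟨t, ht⟩ => ⟨sp t, ht⟩
  · rintro ⟨x, rfl⟩
    obtain ⟨t, rfl⟩ := hsp.2 x
    exact ⟨t, rfl⟩

variable (σ P) in
def doubledEdge : Fin 2 × Fin n × ZMod N × ZMod N → Sym2 (Fin (2 * n) → ZMod m)
  | (b, i, z, q) =>
    blockEdge b (s(P z, P (z + 1)).map (permIso m n (σ i))) (permIso m n (σ i) (P q))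

def doubledColour : Fin 2 × Fin n × ZMod N × ZMod N → Fin (2 * n)
  | (b, i, z, q) => finProdFinEquiv (b - seam z q, i)

lemma mem_edges_map_doubledFamily {u : Fin (2 * n) → ZMod m}
    {K : (torusGraph m (2 * n)).Walk u u}
    (hK : ∀ e, e ∈ K.edges ↔ ∃ z q, e = blockEdge (seam z q) s(P z, P (z + 1)) (P q))
    (j : Fin (2 * n)) (e : Sym2 (Fin (2 * n) → ZMod m)) :
    e ∈ (K.map (permIso m (2 * n) (doubledFamily σ j)).toHom).edges ↔
      ∃ l, doubledColour l = j ∧ doubledEdge σ P l = e := by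
  obtain ⟨⟨β, i⟩, rfl⟩ := finProdFinEquiv.surjective j
  simp only [Walk.edges_map, List.mem_map, hK, doubledFamily_finProdFinEquiv]
  constructor
  · rintro ⟨_, ⟨z, q, rfl⟩, rfl⟩
    exact ⟨(seam z q + β, i, z, q), by simp [doubledColour],
      (blockEdge_map_permIso _ _ _ _ _).symm⟩
  · rintro ⟨⟨b, i', z, q⟩, hc, rfl⟩
    obtain ⟨rfl, rfl⟩ : b - seam z q = β ∧ i' = i := by simpa [doubledColour] using hc
    refine ⟨_, ⟨z, q, rfl⟩, ?_⟩
    exact (blockEdge_map_permIso _ _ _ _ _).trans (by rw [add_sub_cancel]; rfl)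

variable {v : Fin n → ZMod m} {H : (torusGraph m n).Walk v v}

lemma doubledEdge_injective
    (hdec : IsHamDecomp (torusGraph m n) fun i => ⟨_, H.map (permIso m n (σ i)).toHom⟩)
    (hN : 3 ≤ N) (hP : P.Injective) (hH : ∀ e, e ∈ H.edges ↔ ∃ z, e = s(P z, P (z + 1))) :
    (doubledEdge σ P).Injective := by
  rintro ⟨b, i, z, q⟩ ⟨b', i', z', q'⟩ h
  have hdiag : ¬ (s(P z, P (z + 1)).map (permIso m n (σ i))).IsDiag := by
    rw [Sym2.map_mk, Sym2.mk_isDiag_iff]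
    exact (permIso m n (σ i)).injective.ne (H.adj_of_mem_edges ((hH _).2 ⟨z, rfl⟩)).ne
  obtain ⟨rfl, he, hc⟩ := blockEdge_injective hdiag h
  obtain ⟨rfl, rfl⟩ := Prod.ext_iff.1 <| hdec.injective_map_edge
    (φ := fun i => permIso m n (σ i)) hN hP hH (a₁ := (i, z)) (a₂ := (i', z')) he
  rw [hP ((permIso m n (σ i)).injective hc)]

lemma exists_doubledEdge_eq
    (hdec : IsHamDecomp (torusGraph m n) fun i => ⟨_, H.map (permIso m n (σ i)).toHom⟩)
    (hP : P.Surjective) (hH : ∀ e, e ∈ H.edges ↔ ∃ z, e = s(P z, P (z + 1)))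
    {e : Sym2 (Fin (2 * n) → ZMod m)} (he : e ∈ (torusGraph m (2 * n)).edgeSet) :
    ∃ l, doubledEdge σ P l = e := by
  obtain ⟨b, e₀, he₀, c, rfl⟩ := exists_blockEdge_eq he
  obtain ⟨⟨i, z⟩, rfl⟩ :=
    hdec.exists_map_edge_eq (φ := fun i => permIso m n (σ i)) hH he₀
  obtain ⟨q, rfl⟩ := ((permIso m n (σ i)).surjective.comp hP) c
  exact ⟨(b, i, z, q), rfl⟩

end Doubling

/-- For every `n ≥ 1`: if `C₄^{□n} ≅ Q_{2n}` has a source cycle (a Latin Hamilton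
decomposition), then so does `C₄^{□2n} ≅ Q_{4n}`. -/
theorem sourceCycle_double (n : ℕ) (hn : 1 ≤ n) (h : HasSourceCycle 4 n) :
    HasSourceCycle 4 (2 * n) := by
  obtain ⟨v, H, σ, hσ₀, hσ, hdec⟩ := h
  have hH : H.IsHamiltonianCycle := by
    have h₀ := hdec.1 ⟨0, hn⟩
    dsimp only at h₀
    rwa [hσ₀ hn, permIso_one_toHom, Walk.map_id] at h₀
  obtain ⟨N, P, hN, hP, hPH⟩ := hH.exists_cyclic_enumeration
  obtain ⟨u, K, hK, hKedges⟩ :=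
    exists_doubled_cycle hN hP fun z => H.adj_of_mem_edges ((hPH _).2 ⟨z, rfl⟩)
  refine ⟨u, K, doubledFamily σ, doubledFamily_zero hn (hσ₀ hn),
    bijective_doubledFamily_apply hσ, ?_⟩
  exact isHamDecomp_of_labelling (fun j => hK.map (permIso _ _ _).bijective) (doubledEdge σ P)
    doubledColour (doubledEdge_injective hdec hN hP.1 hPH)
    (fun e => exists_doubledEdge_eq hdec hP.2 hPH) (mem_edges_map_doubledFamily hKedges)
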